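/- arXiv:math/0610908 — 4 statements merged into one kernel-verified Lean document; each statement's English description precedes it below -/
import Mathlib

section
/- Let d ≥ 1 be an integer and let β be a real number. For all x, y ∈ ℝ^d with x ≠ y, the determinant of the d×d mixed Hessian matrix of Φ₁(x,y) = |x−y|^{−β}, i.e. of the matrix with entries ∂²Φ₁/∂x_k∂y_ℓ(x,y), equals −(β+1) β^d |x−y|^{−d(β+2)}. In particular, if β > 0 then this determinant is nonzero at every (x,y) with x ≠ y. -/
/-! With `z = x - y`, the `y`-gradient of `‖x - y‖ ^ (-β)` is `β ‖z‖ ^ (-β-2) z`; differentiating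
it in `x` gives `β ‖z‖ ^ (-β-2) (I - (β+2) z zᵀ / ‖z‖²)`. This is a multiple of a rank-one
perturbation of the identity, so the matrix determinant lemma `det (I + c u vᵀ) = 1 + c vᵀu`
yields `(β ‖z‖ ^ (-β-2)) ^ d (1 - (β + 2))`. -/

noncomputable section

/-- The mixed Hessian matrix `(∂²Φ/∂x_k∂y_ℓ)_{k,ℓ}` of a phase `Φ : ℝ^d × ℝ^d → ℝ`,
differentiating first in `y_ℓ` and then in `x_k`. -/
def mixedHessian (d : ℕ) (Φ : EuclideanSpace ℝ (Fin d) × EuclideanSpace ℝ (Fin d) → ℝ)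
    (p : EuclideanSpace ℝ (Fin d) × EuclideanSpace ℝ (Fin d)) : Matrix (Fin d) (Fin d) ℝ :=
  Matrix.of fun k ℓ =>
    fderiv ℝ (fun q => fderiv ℝ Φ q ((0 : EuclideanSpace ℝ (Fin d)), EuclideanSpace.single ℓ 1))
      p (EuclideanSpace.single k 1, (0 : EuclideanSpace ℝ (Fin d)))

open InnerProductSpace

theorem Matrix.det_one_add_smul_vecMulVec {m α : Type*} [Fintype m] [DecidableEq m] [CommRing α]
    (c : α) (u v : m → α) : (1 + c • Matrix.vecMulVec u v).det = 1 + c * (v ⬝ᵥ u) := by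
  rw [← Matrix.smul_vecMulVec, Matrix.vecMulVec_eq Unit,
    Matrix.det_one_add_replicateCol_mul_replicateRow, dotProduct_smul, smul_eq_mul]

section NormRpow

variable {E F : Type*} [NormedAddCommGroup E] [InnerProductSpace ℝ E]
  [NormedAddCommGroup F] [NormedSpace ℝ F] {f : F → E} {f' : F →L[ℝ] E} {x : F}

theorem HasFDerivAt.norm_rpow_of_ne_zero (p : ℝ) (hf : HasFDerivAt f f' x) (hx : f x ≠ 0) :
    HasFDerivAt (fun y ↦ ‖f y‖ ^ p) ((p * ‖f x‖ ^ (p - 2)) • (innerSL ℝ (f x)).comp f') x := by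
  convert hf.norm_sq.rpow_const (p := p / 2) (by simp [hx]) using 1
  · ext y
    rw [← Real.rpow_natCast_mul (norm_nonneg _)]
    ring_nf
  · simp_rw [← Real.rpow_natCast_mul (norm_nonneg _), ← Nat.cast_smul_eq_nsmul ℝ, smul_smul]
    ring_nf

theorem HasFDerivAt.norm_rpow_smul_self (p : ℝ) (hf : HasFDerivAt f f' x) (hx : f x ≠ 0) :
    HasFDerivAt (fun y ↦ ‖f y‖ ^ p • f y)
      (‖f x‖ ^ p • f' + ((p * ‖f x‖ ^ (p - 2)) • (innerSL ℝ (f x)).comp f').smulRight (f x)) x :=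
  (hf.norm_rpow_of_ne_zero p hx).smul hf

end NormRpow

section NormSubRpow

variable {E : Type*} [NormedAddCommGroup E] [InnerProductSpace ℝ E]

theorem fderiv_norm_sub_rpow_apply_inr (β : ℝ) {q : E × E} (hq : q.1 ≠ q.2) (v : E) :
    fderiv ℝ (fun p : E × E ↦ ‖p.1 - p.2‖ ^ (-β)) q (0, v)
      = β * ⟪‖q.1 - q.2‖ ^ (-β - 2) • (q.1 - q.2), v⟫_ℝ := by
  rw [((hasFDerivAt_fst.fun_sub hasFDerivAt_snd).norm_rpow_of_ne_zero (-β) (sub_ne_zero.2 hq)).fderiv]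
  simp [inner_smul_left, inner_sub_left]
  ring

theorem fderiv_fderiv_norm_sub_rpow_apply (β : ℝ) {x y : E} (hxy : x ≠ y) (u v : E) :
    fderiv ℝ (fun q ↦ fderiv ℝ (fun p : E × E ↦ ‖p.1 - p.2‖ ^ (-β)) q (0, v)) (x, y) (u, 0)
      = β * ‖x - y‖ ^ (-β - 2)
          * (⟪u, v⟫_ℝ - (β + 2) * ⟪x - y, u⟫_ℝ * ⟪x - y, v⟫_ℝ / ‖x - y‖ ^ 2) := by
  have hgrad : (fun q ↦ fderiv ℝ (fun p : E × E ↦ ‖p.1 - p.2‖ ^ (-β)) q (0, v))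
      =ᶠ[nhds (x, y)] fun q ↦ β * ⟪‖q.1 - q.2‖ ^ (-β - 2) • (q.1 - q.2), v⟫_ℝ := by
    filter_upwards [(isOpen_ne_fun continuous_fst continuous_snd).mem_nhds hxy] with q hq
    exact fderiv_norm_sub_rpow_apply_inr β hq v
  have hderiv := ((((hasFDerivAt_fst.fun_sub hasFDerivAt_snd).norm_rpow_smul_self (-β - 2)
    (sub_ne_zero.2 hxy)).inner ℝ (hasFDerivAt_const v (x, y))).const_mul β)
  have hpow : ‖x - y‖ ^ (-β - 2 - 2) = ‖x - y‖ ^ (-β - 2) / ‖x - y‖ ^ 2 := by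
    rw [Real.rpow_sub (norm_pos_iff.2 (sub_ne_zero.2 hxy)), Real.rpow_two]
  rw [hgrad.fderiv_eq, hderiv.fderiv]
  simp [inner_add_left, inner_smul_left, inner_sub_left, hpow]
  field_simp
  ring

end NormSubRpow

theorem mixedHessian_norm_sub_rpow {d : ℕ} (β : ℝ) {x y : EuclideanSpace ℝ (Fin d)}
    (hxy : x ≠ y) :
    mixedHessian d (fun p ↦ ‖p.1 - p.2‖ ^ (-β)) (x, y)
      = (β * ‖x - y‖ ^ (-β - 2)) •
          (1 + (-(β + 2) / ‖x - y‖ ^ 2) • Matrix.vecMulVec (x - y).ofLp (x - y).ofLp) := by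
  ext k ℓ
  rw [mixedHessian, Matrix.of_apply, fderiv_fderiv_norm_sub_rpow_apply β hxy, Matrix.smul_apply,
    smul_eq_mul]
  congr 1
  simp [EuclideanSpace.inner_single_right, Matrix.one_apply, Matrix.vecMulVec_apply, eq_comm]
  ring

theorem det_mixedHessian_norm_sub_rpow {d : ℕ} (β : ℝ) {x y : EuclideanSpace ℝ (Fin d)}
    (hxy : x ≠ y) :
    (mixedHessian d (fun p ↦ ‖p.1 - p.2‖ ^ (-β)) (x, y)).det
      = -(β + 1) * β ^ d * ‖x - y‖ ^ (-((d : ℝ) * (β + 2))) := by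
  have hpos : 0 < ‖x - y‖ := norm_pos_iff.2 (sub_ne_zero.2 hxy)
  have hdot : (x - y).ofLp ⬝ᵥ (x - y).ofLp = ‖x - y‖ ^ 2 := by
    rw [← real_inner_self_eq_norm_sq, EuclideanSpace.inner_eq_star_dotProduct]
    rfl
  have hpow : (‖x - y‖ ^ (-β - 2)) ^ d = ‖x - y‖ ^ (-((d : ℝ) * (β + 2))) := by
    rw [← Real.rpow_mul_natCast hpos.le]
    ring_nf
  rw [mixedHessian_norm_sub_rpow β hxy, Matrix.det_smul, Matrix.det_one_add_smul_vecMulVec, hdot,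
    Fintype.card_fin, mul_pow, hpow]
  field_simp
  ring

theorem stmt10_general (d : ℕ) (β : ℝ)
    (x y : EuclideanSpace ℝ (Fin d)) (hxy : x ≠ y) :
    (mixedHessian d
        (fun p : EuclideanSpace ℝ (Fin d) × EuclideanSpace ℝ (Fin d) =>
          ‖p.1 - p.2‖ ^ (-β)) (x, y)).det
      = -(β + 1) * β ^ d * ‖x - y‖ ^ (-((d : ℝ) * (β + 2))) ∧
    (0 < β →
      (mixedHessian d
        (fun p : EuclideanSpace ℝ (Fin d) × EuclideanSpace ℝ (Fin d) =>
          ‖p.1 - p.2‖ ^ (-β)) (x, y)).det ≠ 0) := by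
  have hdet := det_mixedHessian_norm_sub_rpow β hxy
  refine ⟨hdet, fun hβ ↦ ?_⟩
  have hpos : 0 < ‖x - y‖ := norm_pos_iff.2 (sub_ne_zero.2 hxy)
  rw [hdet]
  exact mul_ne_zero (mul_ne_zero (by linarith) (pow_ne_zero d hβ.ne'))
    (Real.rpow_pos_of_pos hpos _).ne'

/-- Lemma 4.2: for `Φ₁(x,y) = |x-y|^{-β}` and `x ≠ y`, the determinant
of the mixed Hessian equals `-(β+1) β^d |x-y|^{-d(β+2)}`; in particular it is nonzero
when `β > 0`. -/
theorem stmt10 (d : ℕ) (hd : 1 ≤ d) (β : ℝ)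
    (x y : EuclideanSpace ℝ (Fin d)) (hxy : x ≠ y) :
    (mixedHessian d
        (fun p : EuclideanSpace ℝ (Fin d) × EuclideanSpace ℝ (Fin d) =>
          ‖p.1 - p.2‖ ^ (-β)) (x, y)).det
      = -(β + 1) * β ^ d * ‖x - y‖ ^ (-((d : ℝ) * (β + 2))) ∧
    (0 < β →
      (mixedHessian d
        (fun p : EuclideanSpace ℝ (Fin d) × EuclideanSpace ℝ (Fin d) =>
          ‖p.1 - p.2‖ ^ (-β)) (x, y)).det ≠ 0) :=
  stmt10_general d β x y hxy
end
end

section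
/- Let n ≥ 1 be an integer and let β, q, b_1, …, b_n be real numbers. Then det( βq (I_{2n} − (β+2) E_{11}) + 2J + 2B ) = −( β²(β+1) q² + 2β² b_1 q − 4 b_1² − 4 ) · ∏_{i=2}^n ( (βq + 2b_i)² + 4 ), where I_{2n} is the 2n×2n identity matrix and E_{11} is the 2n×2n matrix whose (1,1) entry is 1 and all other entries are 0. -/
/-!
All four `n × n` blocks of the matrix are diagonal, so pairing coordinate `i` with `n + i` makes
it block diagonal with `2 × 2` blocks `[[aᵢ, 2], [-2, dᵢ]]`, where `dᵢ = βq + 2bᵢ` and `aᵢ = dᵢ`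
except for the corner correction `a₁ = d₁ - βq(β + 2)`. The determinant is the product of the
`aᵢdᵢ + 4`.
-/

noncomputable section

/-- The standard symplectic matrix `J = [[0, Iₙ], [-Iₙ, 0]]`. -/
def symJ (n : ℕ) : Matrix (Fin n ⊕ Fin n) (Fin n ⊕ Fin n) ℝ :=
  Matrix.fromBlocks 0 1 (-1) 0

namespace Matrix

def sumSelfEquivFinTwoProd (ι : Type*) : ι ⊕ ι ≃ Fin 2 × ι :=
  (Equiv.boolProdEquivSum ι).symm.trans (finTwoEquiv.symm.prodCongr (Equiv.refl ι))

variable {ι R : Type*} [DecidableEq ι] [CommRing R]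

theorem fromBlocks_diagonal_eq_submatrix_blockDiagonal (a b c d : ι → R) :
    fromBlocks (diagonal a) (diagonal b) (diagonal c) (diagonal d) =
      (blockDiagonal fun i => !![a i, b i; c i, d i]).submatrix
        (sumSelfEquivFinTwoProd ι) (sumSelfEquivFinTwoProd ι) := by
  ext (i | i) (j | j) <;>
    simp [sumSelfEquivFinTwoProd, Equiv.boolProdEquivSum, finTwoEquiv, blockDiagonal_apply,
      diagonal_apply]

theorem det_fromBlocks_diagonal [Fintype ι] (a b c d : ι → R) :
    (fromBlocks (diagonal a) (diagonal b) (diagonal c) (diagonal d)).det =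
      ∏ i, (a i * d i - b i * c i) := by
  simp only [fromBlocks_diagonal_eq_submatrix_blockDiagonal, det_submatrix_equiv_self,
    det_blockDiagonal, det_fin_two_of]

end Matrix

open Matrix in
/-- The determinant identity
`det(βq(I - (β+2)E₁₁) + 2J + 2B) = -(β²(β+1)q² + 2β²b₁q - 4b₁² - 4)·∏_{i=2}^n((βq+2bᵢ)²+4)`
for `B = diag(b₁,…,bₙ,b₁,…,bₙ)`. -/
theorem stmt14 (n : ℕ) (hn : 0 < n) (β q : ℝ) (b : Fin n → ℝ) :
    ((β * q) • ((1 : Matrix (Fin n ⊕ Fin n) (Fin n ⊕ Fin n) ℝ) -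
          (β + 2) • Matrix.single (Sum.inl (⟨0, hn⟩ : Fin n)) (Sum.inl (⟨0, hn⟩ : Fin n)) (1 : ℝ)) +
        (2 : ℝ) • symJ n + (2 : ℝ) • Matrix.diagonal (Sum.elim b b)).det
      = -(β ^ 2 * (β + 1) * q ^ 2 + 2 * β ^ 2 * b ⟨0, hn⟩ * q - 4 * b ⟨0, hn⟩ ^ 2 - 4) *
          ∏ i ∈ Finset.univ.erase (⟨0, hn⟩ : Fin n), ((β * q + 2 * b i) ^ 2 + 4) := by
  set z : Fin n := ⟨0, hn⟩
  have hblocks : (β * q) • ((1 : Matrix (Fin n ⊕ Fin n) (Fin n ⊕ Fin n) ℝ) -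
        (β + 2) • single (Sum.inl z) (Sum.inl z) (1 : ℝ)) +
        (2 : ℝ) • symJ n + (2 : ℝ) • diagonal (Sum.elim b b) =
      fromBlocks (diagonal fun i => β * q * (1 - (β + 2) * (Pi.single z 1 : Fin n → ℝ) i) + 2 * b i)
        (diagonal fun _ => 2) (diagonal fun _ => -2) (diagonal fun i => β * q + 2 * b i) := by
    ext (i | i) (j | j) <;>
      simp [symJ, ← diagonal_single, one_apply, diagonal_apply, Pi.single_apply] <;>
      split_ifs <;>
      ring
  rw [hblocks, det_fromBlocks_diagonal, ← Finset.mul_prod_erase _ _ (Finset.mem_univ z)]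
  congr 1
  · simp only [Pi.single_eq_same]
    ring
  · refine Finset.prod_congr rfl fun i hi => ?_
    simp only [Pi.single_eq_of_ne (Finset.ne_of_mem_erase hi)]
    ring
end
end

section
/- Let n ≥ 1 be an integer and let β, q, b_1, …, b_n be real numbers. Then the 2n×2n matrix βq (I_{2n} − (β+2) E_{11}) + 2J + 2B has rank at least 2n−1; equivalently, its kernel has dimension at most 1. -/
/-!
Adding the rank-one matrix `βq(β+2)E₁₁` turns the matrix into `diag(a, a) + 2J` with
`aᵢ = βq + 2bᵢ`. This matrix is invertible: on each coordinate pair `(xᵢ, yᵢ)` it acts as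
`[[aᵢ, 2], [-2, aᵢ]]`, of determinant `aᵢ² + 4 > 0`. A rank-one perturbation lowers the rank
by at most one.
-/

noncomputable section

namespace Matrix

variable {m n K : Type*} [Fintype n] [Field K]

theorem rank_add_le (A B : Matrix m n K) : (A + B).rank ≤ A.rank + B.rank := by
  rw [rank, mulVecLin_add]
  exact (Submodule.finrank_mono (LinearMap.range_add_le _ _)).trans
    (Submodule.finrank_add_le_finrank_add_finrank _ _)

variable [DecidableEq m] [DecidableEq n]

theorem rank_single_le (i : m) (j : n) (c : K) : (single i j c).rank ≤ 1 := by
  rw [← mul_one c, ← smul_eq_mul, ← smul_single, single_eq_single_vecMulVec_single,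
    ← smul_vecMulVec]
  exact rank_vecMulVec_le _ _

theorem rank_add_single_le (A : Matrix m n K) (i : m) (j : n) (c : K) :
    (A + single i j c).rank ≤ A.rank + 1 :=
  (rank_add_le _ _).trans (add_le_add_right (rank_single_le i j c) _)

end Matrix

open Matrix

theorem diagonal_add_smul_symJ {n : ℕ} (d : Fin n → ℝ) (c : ℝ) :
    diagonal (Sum.elim d d) + c • symJ n =
      fromBlocks (diagonal d) (c • 1) (-(c • 1)) (diagonal d) := by
  rw [symJ, ← fromBlocks_diagonal, fromBlocks_smul, fromBlocks_add]
  simp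

theorem isUnit_diagonal_add_smul_symJ {n : ℕ} (d : Fin n → ℝ) {c : ℝ} (hc : c ≠ 0) :
    IsUnit (diagonal (Sum.elim d d) + c • symJ n) := by
  rw [← mulVec_injective_iff_isUnit, diagonal_add_smul_symJ]
  refine (injective_iff_map_eq_zero (mulVecLin _)).2 fun v hv => ?_
  simp only [mulVecLin_apply, fromBlocks_mulVec] at hv
  have h₁ i := congr_fun hv (Sum.inl i)
  have h₂ i := congr_fun hv (Sum.inr i)
  simp only [smul_mulVec, one_mulVec, neg_mulVec, Sum.elim_inl, Sum.elim_inr, Pi.add_apply,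
    mulVec_diagonal, Function.comp_apply, Pi.smul_apply, smul_eq_mul, Pi.zero_apply,
    Pi.neg_apply] at h₁ h₂
  have hdet i : d i ^ 2 + c ^ 2 ≠ 0 := by positivity
  ext (i | i)
  · refine (mul_eq_zero.1 ?_).resolve_left (hdet i)
    linear_combination d i * h₁ i - c * h₂ i
  · refine (mul_eq_zero.1 ?_).resolve_left (hdet i)
    linear_combination c * h₁ i + d i * h₂ i

theorem rank_diagonal_add_smul_symJ {n : ℕ} (d : Fin n → ℝ) {c : ℝ} (hc : c ≠ 0) :
    (diagonal (Sum.elim d d) + c • symJ n).rank = 2 * n := by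
  rw [rank_of_isUnit _ (isUnit_diagonal_add_smul_symJ d hc), Fintype.card_sum, Fintype.card_fin,
    two_mul]

/-- The matrix `βq(I - (β+2)E₁₁) + 2J + 2B`, with
`B = diag(b₁,…,bₙ,b₁,…,bₙ)`, has rank at least `2n - 1` (equivalently, kernel of
dimension at most `1`). -/
theorem stmt15 (n : ℕ) (hn : 0 < n) (β q : ℝ) (b : Fin n → ℝ) :
    2 * n - 1 ≤
      ((β * q) • ((1 : Matrix (Fin n ⊕ Fin n) (Fin n ⊕ Fin n) ℝ) -
            (β + 2) • Matrix.single (Sum.inl (⟨0, hn⟩ : Fin n)) (Sum.inl (⟨0, hn⟩ : Fin n)) (1 : ℝ)) +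
          (2 : ℝ) • symJ n + (2 : ℝ) • Matrix.diagonal (Sum.elim b b)).rank := by
  rw [Nat.sub_le_iff_le_add]
  refine Eq.trans_le ?_ (rank_add_single_le _ (.inl ⟨0, hn⟩) (.inl ⟨0, hn⟩) (β * q * (β + 2)))
  rw [← rank_diagonal_add_smul_symJ (fun i => β * q + 2 * b i) two_ne_zero]
  congr 1
  rw [smul_sub, smul_smul, smul_single, smul_eq_mul, mul_one, sub_add_eq_add_sub,
    sub_add_eq_add_sub, sub_add_cancel, add_right_comm, smul_one_eq_diagonal, ← diagonal_smul,
    diagonal_add]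
  congr 2
  ext (i | i) <;> simp
end
end

section
/- Let n ≥ 1 be an integer, β > 0, Q > 0 and b_1, …, b_n real numbers, and suppose b_1 = −(β+1)Q. Then | det( βQ (I_{2n} − (β+2) E_{11}) + 2J + 2B ) | ≥ 4^n. Consequently, the determinant of this matrix and its derivative in Q cannot vanish simultaneously, i.e. the determinant vanishes only to first order on its zero set. -/
noncomputable section

/-- The matrix `βq(I - (β+2)E₁₁) + 2J + 2B` with `B = diag(b₁,…,bₙ,b₁,…,bₙ)`. -/
def foldMatrix (n : ℕ) (hn : 0 < n) (β : ℝ) (b : Fin n → ℝ) (q : ℝ) :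
    Matrix (Fin n ⊕ Fin n) (Fin n ⊕ Fin n) ℝ :=
  (β * q) • ((1 : Matrix (Fin n ⊕ Fin n) (Fin n ⊕ Fin n) ℝ) -
      (β + 2) • Matrix.single (Sum.inl ⟨0, hn⟩) (Sum.inl ⟨0, hn⟩) (1 : ℝ)) +
    (2 : ℝ) • symJ n + (2 : ℝ) • Matrix.diagonal (Sum.elim b b)

/-!
Interleaving the coordinates `xᵢ, yᵢ` makes the matrix block diagonal with `2 × 2` blocks
`[[aᵢ, 2], [-2, dᵢ]]`, so its determinant is `∏ᵢ (aᵢ dᵢ + 4)`. For `i ≠ 1` (index `⟨0, hn⟩`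
here) one has `aᵢ = dᵢ`, and for `i = 1` the condition `b₁ = -(β+1)Q` turns the factor into
`(β+1)(β+2)²Q² + 4`. Hence every factor is at least `4`, the determinant is at least `4ⁿ`, and
in particular it does not vanish.
-/

open Matrix

theorem Matrix.det_fromBlocks_diagonal_s16 {R ι : Type*} [CommRing R] [Fintype ι] [DecidableEq ι]
    (a b c d : ι → R) :
    (fromBlocks (diagonal a) (diagonal b) (diagonal c) (diagonal d)).det =
      ∏ i, (a i * d i - b i * c i) := by
  let e : Fin 2 × ι ≃ ι ⊕ ι :=
    (finTwoEquiv.prodCongr (Equiv.refl ι)).trans (Equiv.boolProdEquivSum ι)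
  have hblock : (fromBlocks (diagonal a) (diagonal b) (diagonal c) (diagonal d)).submatrix e e =
      blockDiagonal fun i => !![a i, b i; c i, d i] := by
    ext ⟨k, i⟩ ⟨l, j⟩
    fin_cases k <;> fin_cases l <;> by_cases hij : i = j <;>
      simp [e, finTwoEquiv, blockDiagonal_apply, hij]
  rw [← det_submatrix_equiv_self e, hblock, det_blockDiagonal]
  simp only [det_fin_two_of]

section foldMatrix

variable (n : ℕ) (hn : 0 < n) (β : ℝ) (b : Fin n → ℝ) (q : ℝ)

theorem foldMatrix_eq_fromBlocks :
    foldMatrix n hn β b q =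
      fromBlocks
        (diagonal fun i => β * q * (1 - (β + 2) * (Pi.single ⟨0, hn⟩ 1 : Fin n → ℝ) i) + 2 * b i)
        (diagonal fun _ => 2) (diagonal fun _ => -2) (diagonal fun i => β * q + 2 * b i) := by
  ext (i | i) (j | j) <;>
    simp [foldMatrix, symJ, Matrix.single, Matrix.one_apply, diagonal_apply, Pi.single_apply] <;>
    grind

theorem foldMatrix_det :
    (foldMatrix n hn β b q).det = ∏ i, ((β * q * (1 - (β + 2) *
      (Pi.single ⟨0, hn⟩ 1 : Fin n → ℝ) i) + 2 * b i) * (β * q + 2 * b i) + 4) := by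
  rw [foldMatrix_eq_fromBlocks, det_fromBlocks_diagonal_s16]
  exact Finset.prod_congr rfl fun i _ => by ring

theorem four_pow_le_foldMatrix_det (hβ : -1 ≤ β) (hb : b ⟨0, hn⟩ = -(β + 1) * q) :
    (4 : ℝ) ^ n ≤ (foldMatrix n hn β b q).det := by
  rw [foldMatrix_det]
  calc (4 : ℝ) ^ n = ∏ _i : Fin n, (4 : ℝ) := by simp
    _ ≤ _ := Finset.prod_le_prod (fun _ _ => by norm_num) fun i _ => ?_
  rcases eq_or_ne i ⟨0, hn⟩ with rfl | hi
  · have hfactor : (β * q * (1 - (β + 2) * (Pi.single ⟨0, hn⟩ 1 : Fin n → ℝ) ⟨0, hn⟩)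
        + 2 * b ⟨0, hn⟩) * (β * q + 2 * b ⟨0, hn⟩) + 4 = (β + 1) * ((β + 2) * q) ^ 2 + 4 := by
      rw [Pi.single_eq_same, hb]
      ring
    rw [hfactor]
    exact le_add_of_nonneg_left (mul_nonneg (by linarith) (sq_nonneg _))
  · rw [Pi.single_eq_of_ne hi, mul_zero, sub_zero, mul_one]
    exact le_add_of_nonneg_left (mul_self_nonneg _)

end foldMatrix

theorem stmt16_general (n : ℕ) (hn : 0 < n) (β Q : ℝ) (hβ : 0 < β)
    (b : Fin n → ℝ) (hb : b ⟨0, hn⟩ = -(β + 1) * Q) :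
    (4 : ℝ) ^ n ≤ |(foldMatrix n hn β b Q).det| ∧
    ¬((foldMatrix n hn β b Q).det = 0 ∧
        deriv (fun q : ℝ => (foldMatrix n hn β b q).det) Q = 0) := by
  have hdet := four_pow_le_foldMatrix_det n hn β b Q (by linarith) hb
  have hpos : 0 < (foldMatrix n hn β b Q).det := lt_of_lt_of_le (by positivity) hdet
  exact ⟨hdet.trans (le_abs_self _), fun h => hpos.ne' h.1⟩

/-- If `b₁ = -(β+1)Q` (the vanishing of the gradient of the Hessian
determinant) then `|det(βQ(I - (β+2)E₁₁) + 2J + 2B)| ≥ 4ⁿ`; consequently the determinant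
and its derivative in `Q` cannot vanish simultaneously, i.e. the determinant vanishes
only to first order on its zero set. -/
theorem stmt16 (n : ℕ) (hn : 0 < n) (β Q : ℝ) (hβ : 0 < β) (hQ : 0 < Q)
    (b : Fin n → ℝ) (hb : b ⟨0, hn⟩ = -(β + 1) * Q) :
    (4 : ℝ) ^ n ≤ |(foldMatrix n hn β b Q).det| ∧
    ¬((foldMatrix n hn β b Q).det = 0 ∧
        deriv (fun q : ℝ => (foldMatrix n hn β b q).det) Q = 0) :=
  stmt16_general n hn β Q hβ b hb
end
end
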